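/- For unit-norm features with a labeling y, the averaged normalization term of the contrastive loss is bounded below in terms of pairwise squared distances and positive-pair similarities: if for each i the set of negatives N_i = {k ∈ {1,...,n} : y_k ≠ y_i} is nonempty and satisfies N_i ⊆ A_i, then (1/n) ∑_{i=1}^n log( ∑_{k ∈ A_i} exp(⟨z_i, z_k⟩/τ) ) ≥ (1/n) ∑_{i=1}^n log |N_i| + (1/(n τ)) ∑_{i=1}^n (1/|N_i|) · ( n − (1/2) ∑_{k=1}^n ‖z_i − z_k‖² − ∑_{k : y_k = y_i} ⟨z_i, z_k⟩ ). -/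

import Mathlib

open RealInnerProductSpace Finset

/-! The normalization term at `i` is a log-sum-exp over `A i ⊇ N i`; dropping the terms outside
`N i` and applying Jensen's inequality to `exp` bounds it below by `log |N i|` plus the mean of
`⟪z i, z k⟫ / τ` over the negatives `k ∈ N i`. For unit vectors `⟪z i, z k⟫ = 1 - ‖z i - z k‖² / 2`,
so summing over all `k` and removing the positives turns that sum into the bracket of the
theorem. -/

namespace Real

variable {ι : Type*}

theorem log_card_add_mean_le_log_sum_exp {s : Finset ι} (hs : s.Nonempty) (a : ι → ℝ) :
    log #s + (1 / #s) * ∑ k ∈ s, a k ≤ log (∑ k ∈ s, exp (a k)) := by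
  have hcard : (0 : ℝ) < #s := by exact_mod_cast hs.card_pos
  have jensen : exp (∑ k ∈ s, (1 / #s : ℝ) • a k) ≤ ∑ k ∈ s, (1 / #s : ℝ) • exp (a k) :=
    convexOn_exp.map_sum_le (fun _ _ => by positivity)
      (by rw [sum_const, nsmul_eq_mul]; field_simp) (fun _ _ => Set.mem_univ _)
  simp only [smul_eq_mul, ← mul_sum] at jensen
  have hmul : #s * exp ((1 / #s) * ∑ k ∈ s, a k) ≤ ∑ k ∈ s, exp (a k) := by
    calc #s * exp ((1 / #s) * ∑ k ∈ s, a k)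
        ≤ #s * ((1 / #s) * ∑ k ∈ s, exp (a k)) := by gcongr
      _ = ∑ k ∈ s, exp (a k) := by field_simp
  calc log #s + (1 / #s) * ∑ k ∈ s, a k
      = log (#s * exp ((1 / #s) * ∑ k ∈ s, a k)) := by
        rw [log_mul hcard.ne' (exp_pos _).ne', log_exp]
    _ ≤ log (∑ k ∈ s, exp (a k)) := log_le_log (by positivity) hmul

theorem log_card_add_mean_le_log_sum_exp_of_subset {s t : Finset ι} (hs : s.Nonempty)
    (hst : s ⊆ t) (a : ι → ℝ) :
    log #s + (1 / #s) * ∑ k ∈ s, a k ≤ log (∑ k ∈ t, exp (a k)) :=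
  (log_card_add_mean_le_log_sum_exp hs a).trans <|
    log_le_log (sum_pos (fun _ _ => exp_pos _) hs)
      (sum_le_sum_of_subset_of_nonneg hst fun _ _ _ => (exp_pos _).le)

end Real

section UnitVectors

variable {E : Type*} [NormedAddCommGroup E] [InnerProductSpace ℝ E]

theorem norm_sub_sq_eq_two_sub_two_inner_of_norm_eq_one {x y : E} (hx : ‖x‖ = 1)
    (hy : ‖y‖ = 1) : ‖x - y‖ ^ 2 = 2 - 2 * ⟪x, y⟫ := by
  rw [norm_sub_sq_real, hx, hy]
  ring

theorem sum_inner_eq_card_sub_half_sum_norm_sub_sq {ι : Type*} (s : Finset ι) {x : E}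
    (hx : ‖x‖ = 1) (z : ι → E) (hz : ∀ k ∈ s, ‖z k‖ = 1) :
    ∑ k ∈ s, ⟪x, z k⟫ = #s - (1 / 2) * ∑ k ∈ s, ‖x - z k‖ ^ 2 := by
  rw [sum_congr rfl fun k hk => norm_sub_sq_eq_two_sub_two_inner_of_norm_eq_one hx (hz k hk),
    sum_sub_distrib, ← mul_sum, sum_const, nsmul_eq_mul]
  ring

end UnitVectors

theorem normalization_term_lower_bound_general
    {E : Type*} [NormedAddCommGroup E] [InnerProductSpace ℝ E]
    (n K : ℕ) (z : Fin n → E) (hz : ∀ i, ‖z i‖ = 1)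
    (y : Fin n → Fin K) (τ : ℝ)
    (A : Fin n → Finset (Fin n))
    (hNA : ∀ i k, y k ≠ y i → k ∈ A i)
    (hN : ∀ i, (Finset.univ.filter (fun k => y k ≠ y i)).Nonempty) :
    (1 / (n : ℝ)) * ∑ i, Real.log (∑ k ∈ A i, Real.exp (⟪z i, z k⟫ / τ))
      ≥ (1 / (n : ℝ)) *
          ∑ i, Real.log (((Finset.univ.filter (fun k => y k ≠ y i)).card : ℝ))
        + (1 / ((n : ℝ) * τ)) *
          ∑ i, (1 / (((Finset.univ.filter (fun k => y k ≠ y i)).card : ℝ))) *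
            ((n : ℝ) - (1 / 2) * ∑ k, ‖z i - z k‖ ^ 2
              - ∑ k ∈ Finset.univ.filter (fun k => y k = y i), ⟪z i, z k⟫) := by
  set N : Fin n → Finset (Fin n) := fun i => univ.filter fun k => y k ≠ y i
  have bracket_eq (i : Fin n) : (n : ℝ) - (1 / 2) * ∑ k, ‖z i - z k‖ ^ 2
      - ∑ k ∈ univ.filter (fun k => y k = y i), ⟪z i, z k⟫ = ∑ k ∈ N i, ⟪z i, z k⟫ := by
    have positives_add_negatives := sum_filter_add_sum_filter_not univ (fun k => y k = y i) fun k => ⟪z i, z k⟫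
    have total := sum_inner_eq_card_sub_half_sum_norm_sub_sq univ (hz i) z fun k _ => hz k
    rw [card_univ, Fintype.card_fin] at total
    linarith
  have per_index (i : Fin n) : Real.log #(N i) + (1 / #(N i)) * ∑ k ∈ N i, ⟪z i, z k⟫ / τ
      ≤ Real.log (∑ k ∈ A i, Real.exp (⟪z i, z k⟫ / τ)) :=
    Real.log_card_add_mean_le_log_sum_exp_of_subset (hN i)
      (fun k hk => hNA i k (mem_filter.mp hk).2) _
  simp only [bracket_eq, ge_iff_le]
  calc (1 / (n : ℝ)) * ∑ i, Real.log #(N i)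
        + (1 / ((n : ℝ) * τ)) * ∑ i, (1 / #(N i)) * ∑ k ∈ N i, ⟪z i, z k⟫
      = (1 / (n : ℝ)) * ∑ i, (Real.log #(N i) + (1 / #(N i)) * ∑ k ∈ N i, ⟪z i, z k⟫ / τ) := by
        rw [mul_sum, mul_sum, mul_sum, ← sum_add_distrib]
        refine sum_congr rfl fun i _ => ?_
        rw [← sum_div]
        ring
    _ ≤ (1 / (n : ℝ)) * ∑ i, Real.log (∑ k ∈ A i, Real.exp (⟪z i, z k⟫ / τ)) := by
        gcongr with i
        exact per_index i

/-- For unit-norm features with a labeling, the averaged normalization term of the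
contrastive loss is bounded below in terms of pairwise squared distances and
positive-pair similarities. -/
theorem normalization_term_lower_bound
    {E : Type*} [NormedAddCommGroup E] [InnerProductSpace ℝ E]
    (n K : ℕ) (z : Fin n → E) (hz : ∀ i, ‖z i‖ = 1)
    (y : Fin n → Fin K) (τ : ℝ) (hτ : 0 < τ)
    (A : Fin n → Finset (Fin n))
    (hNA : ∀ i k, y k ≠ y i → k ∈ A i)
    (hN : ∀ i, (Finset.univ.filter (fun k => y k ≠ y i)).Nonempty) :
    (1 / (n : ℝ)) * ∑ i, Real.log (∑ k ∈ A i, Real.exp (⟪z i, z k⟫ / τ))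
      ≥ (1 / (n : ℝ)) *
          ∑ i, Real.log (((Finset.univ.filter (fun k => y k ≠ y i)).card : ℝ))
        + (1 / ((n : ℝ) * τ)) *
          ∑ i, (1 / (((Finset.univ.filter (fun k => y k ≠ y i)).card : ℝ))) *
            ((n : ℝ) - (1 / 2) * ∑ k, ‖z i - z k‖ ^ 2
              - ∑ k ∈ Finset.univ.filter (fun k => y k = y i), ⟪z i, z k⟫) :=
  normalization_term_lower_bound_general n K z hz y τ A hNA hN
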